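/- For α > 0, the sequence of absolute values of generalized binomial coefficients |C(α, j)| tends to 0 as j → ∞. -/

import Mathlib

open Filter

/-- The generalized binomial coefficient `C(x, n) = x(x-1)⋯(x-n+1)/n!`. -/
noncomputable def genBinom (x : ℝ) (n : ℕ) : ℝ :=
  (∏ i ∈ Finset.range n, (x - i)) / (Nat.factorial n : ℝ)

lemma genBinom_succ (x : ℝ) (n : ℕ) :
    genBinom x (n + 1) = genBinom x n * (x - n) / (n + 1) := by
  unfold genBinom
  rw [Finset.prod_range_succ, Nat.factorial_succ]
  have h1 : (Nat.factorial n : ℝ) ≠ 0 := Nat.cast_ne_zero.mpr (Nat.factorial_ne_zero n)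
  have h2 : ((n : ℝ) + 1) ≠ 0 := by positivity
  push_cast
  field_simp
  try exact Or.inl trivial

theorem genBinom_abs_tendsto_zero (α : ℝ) (hα : 0 < α) :
    Tendsto (fun j : ℕ => |genBinom α j|) atTop (nhds 0) := by
  set N : ℕ := ⌈α⌉₊ with hN
  have hNα : α ≤ N := Nat.le_ceil α
  have hNpos : 0 < N := Nat.ceil_pos.mpr hα
  have key : ∀ j : ℕ, |genBinom α (N + j)| ≤ |genBinom α N| * N / (N + j) := by
    intro j
    induction j with
    | zero =>
      simp only [Nat.cast_zero, add_zero, Nat.add_zero]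
      rw [mul_div_assoc, div_self (by positivity : (N : ℝ) ≠ 0), mul_one]
    | succ j ih =>
      have hm : (0 : ℝ) < (N : ℝ) + j := by positivity
      have hαm : α ≤ (N : ℝ) + j := le_trans hNα (by linarith [Nat.cast_nonneg (α := ℝ) j])
      have heq : |genBinom α (N + (j + 1))| =
          |genBinom α (N + j)| * (((N : ℝ) + j - α) / ((N : ℝ) + j + 1)) := by
        have : N + (j + 1) = (N + j) + 1 := by ring
        rw [this, genBinom_succ, abs_div, abs_mul]
        rw [abs_of_nonpos (by push_cast; linarith : α - ((N + j : ℕ) : ℝ) ≤ 0),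
          abs_of_pos (by positivity : (0 : ℝ) < ((N + j : ℕ) : ℝ) + 1)]
        push_cast
        ring
      rw [heq]
      have h1 : |genBinom α (N + j)| * (((N : ℝ) + j - α) / ((N : ℝ) + j + 1)) ≤
          (|genBinom α N| * N / ((N : ℝ) + j)) * (((N : ℝ) + j - α) / ((N : ℝ) + j + 1)) := by
        apply mul_le_mul_of_nonneg_right ih
        apply div_nonneg (by linarith) (by positivity)
      refine h1.trans ?_
      have h2 : ((N : ℝ) + j - α) / ((N : ℝ) + j + 1) ≤ ((N : ℝ) + j) / ((N : ℝ) + j + 1) := by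
        gcongr
        linarith
      calc (|genBinom α N| * N / ((N : ℝ) + j)) * (((N : ℝ) + j - α) / ((N : ℝ) + j + 1))
          ≤ (|genBinom α N| * N / ((N : ℝ) + j)) * (((N : ℝ) + j) / ((N : ℝ) + j + 1)) := by
            apply mul_le_mul_of_nonneg_left h2; positivity
        _ = |genBinom α N| * N / ((N : ℝ) + (j + 1 : ℕ)) := by
            push_cast
            rw [div_mul_div_comm, mul_comm (|genBinom α N| * (N : ℝ)) ((N : ℝ) + j),
              mul_div_mul_left _ _ (ne_of_gt hm)]
            ring_nf
  apply squeeze_zero' (Eventually.of_forall fun j => abs_nonneg _)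
    (g := fun j : ℕ => |genBinom α N| * N / j)
  · filter_upwards [eventually_ge_atTop N] with j hj
    have h := key (j - N)
    rw [Nat.add_sub_cancel' hj] at h
    have hcast : ((N : ℝ) + ((j - N : ℕ) : ℝ)) = (j : ℝ) := by
      rw [Nat.cast_sub hj]; ring
    rwa [hcast] at h
  · exact tendsto_const_div_atTop_nhds_zero_nat _
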